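/- Let 0 = ω₀ < ω₁ < ... < ω_N = π and γ < minₙ (ω_{n+1}−ωₙ)/(ω_{n+1}+ωₙ). Define the empirical scaling and wavelet filters φ̂₁, ψ̂₁, ..., ψ̂_{N−1} piecewise via a transition function β with β=0 on (−∞,0], β=1 on [1,∞), β(x)+β(1−x)=1 on [0,1]. Then for all ω ∈ [0,π], |φ̂₁(ω)|² + Σₙ |ψ̂ₙ(ω)|² = 1 (partition of unity of squared filter magnitudes on [0,π]). -/

import Mathlib

/-!
Write `Lₙ(x)` for the square of the low-pass profile with transition band
`[(1 - γ)ωₙ, (1 + γ)ωₙ]`, so that `|φ̂₁|² = L₁`. On the lower transition band of `ψ̂ₙ` its sine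
has the same argument as the cosine in `Lₙ`, so `|ψ̂ₙ|² + Lₙ = 1` there. The condition on `γ` makes
consecutive transition bands disjoint, whence `|ψ̂ₙ|² = Lₙ₊₁ - Lₙ` for `n < N - 1` and
`|ψ̂_{N-1}|² = 1 - L_{N-1}`, and the sum telescopes to `1`.

In the code, `ψ̂ₙ = bandPass γ β ωₙ ωₙ₊₁` for `n < N - 1` and `ψ̂_{N-1} = highPass γ β ω_{N-1}`.
-/

open Real Finset

namespace EmpiricalWavelet

variable (γ : ℝ) (β : ℝ → ℝ)

noncomputable def lowPass (b x : ℝ) : ℝ :=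
  if x ≤ (1 - γ) * b then 1
  else if x ≤ (1 + γ) * b then cos (π / 2 * β ((x - (1 - γ) * b) / (2 * γ * b)))
  else 0

noncomputable def highPass (b x : ℝ) : ℝ :=
  if x < (1 - γ) * b then 0
  else if x ≤ (1 + γ) * b then sin (π / 2 * β ((x - (1 - γ) * b) / (2 * γ * b)))
  else 1

noncomputable def bandPass (b₁ b₂ x : ℝ) : ℝ :=
  if x < (1 - γ) * b₁ then 0
  else if x ≤ (1 + γ) * b₁ then sin (π / 2 * β ((x - (1 - γ) * b₁) / (2 * γ * b₁)))
  else lowPass γ β b₂ x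

variable {γ β}

theorem lowPass_of_le {b x : ℝ} (hx : x ≤ (1 - γ) * b) : lowPass γ β b x = 1 :=
  if_pos hx

theorem lowPass_of_lt {b x : ℝ} (hγb : 0 ≤ γ * b) (hx : (1 + γ) * b < x) :
    lowPass γ β b x = 0 := by
  rw [lowPass, if_neg (by linarith), if_neg hx.not_ge]

theorem highPass_sq_add_lowPass_sq (hβ : β 0 = 0) {b : ℝ} (hγb : 0 ≤ γ * b) (x : ℝ) :
    highPass γ β b x ^ 2 + lowPass γ β b x ^ 2 = 1 := by
  unfold highPass lowPass
  split_ifs <;> try linarith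
  · have hx : x - (1 - γ) * b = 0 := by linarith
    simp [hx, hβ]
  · exact sin_sq_add_cos_sq _

theorem lowPass_mul_lowPass {b₁ b₂ : ℝ} (hγb : 0 ≤ γ * b₁)
    (hsep : (1 + γ) * b₁ ≤ (1 - γ) * b₂) (x : ℝ) :
    lowPass γ β b₁ x * lowPass γ β b₂ x = lowPass γ β b₁ x := by
  rcases le_or_gt x ((1 + γ) * b₁) with hx | hx
  · rw [lowPass_of_le (hx.trans hsep), mul_one]
  · rw [lowPass_of_lt hγb hx, zero_mul]

theorem bandPass_eq_highPass_mul_lowPass {b₁ b₂ : ℝ} (hsep : (1 + γ) * b₁ ≤ (1 - γ) * b₂)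
    (x : ℝ) : bandPass γ β b₁ b₂ x = highPass γ β b₁ x * lowPass γ β b₂ x := by
  unfold bandPass highPass
  split_ifs with _ hx
  · rw [zero_mul]
  · rw [lowPass_of_le (hx.trans hsep), mul_one]
  · rw [one_mul]

theorem bandPass_sq (hβ : β 0 = 0) {b₁ b₂ : ℝ} (hγb : 0 ≤ γ * b₁)
    (hsep : (1 + γ) * b₁ ≤ (1 - γ) * b₂) (x : ℝ) :
    bandPass γ β b₁ b₂ x ^ 2 = lowPass γ β b₂ x ^ 2 - lowPass γ β b₁ x ^ 2 := by
  have hunit := highPass_sq_add_lowPass_sq hβ hγb x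
  have hprod := lowPass_mul_lowPass (β := β) hγb hsep x
  rw [bandPass_eq_highPass_mul_lowPass hsep]
  linear_combination lowPass γ β b₂ x ^ 2 * hunit
    - (lowPass γ β b₁ x + lowPass γ β b₁ x * lowPass γ β b₂ x) * hprod

end EmpiricalWavelet

open EmpiricalWavelet

theorem one_add_mul_lt_one_sub_mul_of_lt_div {γ a b : ℝ} (ha : 0 ≤ a) (hab : a < b)
    (hγ : γ < (b - a) / (b + a)) : (1 + γ) * a < (1 - γ) * b := by
  rw [lt_div_iff₀ (by linarith)] at hγ
  linarith

theorem empirical_filter_bank_partition_of_unity_general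
    (N : ℕ) (hN : 2 ≤ N)
    (ω : ℕ → ℝ) (hω0 : ω 0 = 0)
    (hmono : ∀ n < N, ω n < ω (n + 1))
    (γ : ℝ) (hγ0 : 0 < γ)
    (hγ : ∀ n < N, γ < (ω (n + 1) - ω n) / (ω (n + 1) + ω n))
    (β : ℝ → ℝ)
    (hβ0 : ∀ x ≤ (0 : ℝ), β x = 0)
    (φ : ℝ → ℝ) (ψ : ℕ → ℝ → ℝ)
    (hφ : ∀ x ∈ Set.Icc (0 : ℝ) Real.pi,
      φ x = if x ≤ (1 - γ) * ω 1 then 1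
        else if x ≤ (1 + γ) * ω 1 then
          Real.cos (Real.pi / 2 * β ((x - (1 - γ) * ω 1) / (2 * γ * ω 1)))
        else 0)
    (hψ : ∀ n, 1 ≤ n → n ≤ N - 1 → ∀ x ∈ Set.Icc (0 : ℝ) Real.pi,
      ψ n x =
        if x < (1 - γ) * ω n then 0
        else if x ≤ (1 + γ) * ω n then
          Real.sin (Real.pi / 2 * β ((x - (1 - γ) * ω n) / (2 * γ * ω n)))
        else if n = N - 1 then 1
        else if x ≤ (1 - γ) * ω (n + 1) then 1
        else if x ≤ (1 + γ) * ω (n + 1) then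
          Real.cos (Real.pi / 2 * β ((x - (1 - γ) * ω (n + 1)) / (2 * γ * ω (n + 1))))
        else 0) :
    ∀ x ∈ Set.Icc (0 : ℝ) Real.pi,
      |φ x| ^ 2 + ∑ n ∈ Finset.Icc 1 (N - 1), |ψ n x| ^ 2 = 1 := by
  intro x hx
  have hβ : β 0 = 0 := hβ0 0 le_rfl
  have hωmono : StrictMonoOn ω (Set.Iic N) :=
    strictMonoOn_Iic_of_lt_succ fun m hm => by simpa using hmono m hm
  have hω_nonneg : ∀ n ≤ N, 0 ≤ ω n := fun n hn => by
    simpa [hω0] using hωmono.monotoneOn (Set.mem_Iic.2 (Nat.zero_le N)) (Set.mem_Iic.2 hn)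
      (Nat.zero_le n)
  have hγω : ∀ n < N, 0 ≤ γ * ω n := fun n hn => mul_nonneg hγ0.le (hω_nonneg n hn.le)
  have hsep : ∀ n < N, (1 + γ) * ω n ≤ (1 - γ) * ω (n + 1) := fun n hn =>
    (one_add_mul_lt_one_sub_mul_of_lt_div (hω_nonneg n hn.le) (hmono n hn) (hγ n hn)).le
  set L : ℕ → ℝ := fun n => lowPass γ β (ω n) x ^ 2
  have hφx : |φ x| ^ 2 = L 1 := by rw [sq_abs, hφ x hx]; rfl
  have hψ_mid : ∀ n ∈ Ico 1 (N - 1), |ψ n x| ^ 2 = L (n + 1) - L n := by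
    intro n hn
    rw [mem_Ico] at hn
    have hψn : ψ n x = bandPass γ β (ω n) (ω (n + 1)) x := by
      rw [hψ n hn.1 (by omega) x hx, bandPass, lowPass, if_neg (show n ≠ N - 1 by omega)]
    rw [sq_abs, hψn, bandPass_sq hβ (hγω n (by omega)) (hsep n (by omega))]
  have hψ_last : |ψ (N - 1) x| ^ 2 = 1 - L (N - 1) := by
    have hψN : ψ (N - 1) x = highPass γ β (ω (N - 1)) x := by
      rw [hψ (N - 1) (by omega) le_rfl x hx, highPass, if_pos rfl]
    rw [sq_abs, hψN, ← highPass_sq_add_lowPass_sq hβ (hγω (N - 1) (by omega))]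
    ring
  rw [hφx, ← Ico_add_one_right_eq_Icc, sum_Ico_succ_top (by omega), sum_congr rfl hψ_mid,
    sum_Ico_sub L (by omega), hψ_last]
  ring

theorem empirical_filter_bank_partition_of_unity
    (N : ℕ) (hN : 2 ≤ N)
    (ω : ℕ → ℝ) (hω0 : ω 0 = 0) (hωN : ω N = Real.pi)
    (hmono : ∀ n < N, ω n < ω (n + 1))
    (γ : ℝ) (hγ0 : 0 < γ)
    (hγ : ∀ n < N, γ < (ω (n + 1) - ω n) / (ω (n + 1) + ω n))
    (β : ℝ → ℝ)
    (hβ0 : ∀ x ≤ (0 : ℝ), β x = 0) (hβ1 : ∀ x ≥ (1 : ℝ), β x = 1)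
    (hβsym : ∀ x ∈ Set.Icc (0 : ℝ) 1, β x + β (1 - x) = 1)
    (φ : ℝ → ℝ) (ψ : ℕ → ℝ → ℝ)
    (hφ : ∀ x ∈ Set.Icc (0 : ℝ) Real.pi,
      φ x = if x ≤ (1 - γ) * ω 1 then 1
        else if x ≤ (1 + γ) * ω 1 then
          Real.cos (Real.pi / 2 * β ((x - (1 - γ) * ω 1) / (2 * γ * ω 1)))
        else 0)
    (hψ : ∀ n, 1 ≤ n → n ≤ N - 1 → ∀ x ∈ Set.Icc (0 : ℝ) Real.pi,
      ψ n x =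
        if x < (1 - γ) * ω n then 0
        else if x ≤ (1 + γ) * ω n then
          Real.sin (Real.pi / 2 * β ((x - (1 - γ) * ω n) / (2 * γ * ω n)))
        else if n = N - 1 then 1
        else if x ≤ (1 - γ) * ω (n + 1) then 1
        else if x ≤ (1 + γ) * ω (n + 1) then
          Real.cos (Real.pi / 2 * β ((x - (1 - γ) * ω (n + 1)) / (2 * γ * ω (n + 1))))
        else 0) :
    ∀ x ∈ Set.Icc (0 : ℝ) Real.pi,
      |φ x| ^ 2 + ∑ n ∈ Finset.Icc 1 (N - 1), |ψ n x| ^ 2 = 1 :=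
  empirical_filter_bank_partition_of_unity_general N hN ω hω0 hmono γ hγ0 hγ β hβ0 φ ψ hφ hψ
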